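/- Let G be a tree and let S be a minimal perfect critical set of G. Let B = {u ∈ V∖S : N_S(u) ≠ ∅ and N_S(u) ≠ S}. Then every vertex v ∈ B has exactly two neighbors in S ∪ B, i.e., every v ∈ B has degree 2 in the simplified graph G̃ = G[S ∪ B]. -/

import Mathlib

/-!
Let `y` be an eigenvector inducing the minimal perfect critical set `S`, and `v ∈ B`, so `y v = 0`.
Rescaling `y` by a constant on each branch of the tree at `v` (each component of `G` with the
edges at `v` deleted) keeps the eigenvalue equation everywhere except possibly at `v`, and at `v`
exactly when the rescaled neighbours of `v` still sum to zero. By minimality, such a rescaling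
vanishes either on all of `S` or nowhere on `S`. Rescaling only the branch of a neighbour `u ∉ S`
shows that `u` has no neighbour in `S`, so `v` has no neighbour in `B`; playing two neighbours
of `v` in `S` against each other shows there are at most two; and the eigenvalue equation at `v`,
`∑_{x ~ v} y x = 0`, forces a second one.
-/

open Matrix
open scoped Classical

/-- `S` is a critical set of `G`: `S` is nonempty and there is a nonzero eigenvector of the
Laplacian of `G` vanishing outside `S`. -/
def IsCriticalSet {V : Type*} [Fintype V] [DecidableEq V] (G : SimpleGraph V) (S : Set V) :
    Prop :=
  S.Nonempty ∧ ∃ (lam : ℝ) (y : V → ℝ), y ≠ 0 ∧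
    G.lapMatrix ℝ *ᵥ y = lam • y ∧ ∀ v ∉ S, y v = 0

/-- `S` is a perfect critical set of `G`: some inducing eigenvector vanishes outside `S` and is
nonzero at every vertex of `S`. -/
def IsPerfectCriticalSet {V : Type*} [Fintype V] [DecidableEq V] (G : SimpleGraph V)
    (S : Set V) : Prop :=
  S.Nonempty ∧ ∃ (lam : ℝ) (y : V → ℝ), y ≠ 0 ∧
    G.lapMatrix ℝ *ᵥ y = lam • y ∧ (∀ v ∉ S, y v = 0) ∧ ∀ v ∈ S, y v ≠ 0

/-- `S` is a minimal perfect critical set of `G`: a perfect critical set none of whose proper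
subsets is a perfect critical set. -/
def IsMinimalPerfectCriticalSet {V : Type*} [Fintype V] [DecidableEq V] (G : SimpleGraph V)
    (S : Set V) : Prop :=
  IsPerfectCriticalSet G S ∧ ∀ T : Set V, T ⊂ S → ¬ IsPerfectCriticalSet G T

namespace SimpleGraph

variable {V : Type*} {G : SimpleGraph V}

def branch (G : SimpleGraph V) (v x : V) : (G.deleteIncidenceSet v).ConnectedComponent :=
  (G.deleteIncidenceSet v).connectedComponentMk x

theorem branch_eq_of_adj {v a b : V} (h : (G.deleteIncidenceSet v).Adj a b) :
    G.branch v a = G.branch v b :=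
  ConnectedComponent.sound h.reachable

/-- Two neighbours `a ≠ b` of `v` in the same branch would make the edge `va` not a bridge. -/
theorem IsAcyclic.branch_injOn (hG : G.IsAcyclic) (v : V) :
    Set.InjOn (G.branch v) (G.neighborSet v) := by
  intro a ha b hb hab
  by_contra hne
  refine isAcyclic_iff_forall_adj_isBridge.mp hG ha ?_
  have hle : G.deleteIncidenceSet v ≤ G.deleteEdges {s(v, a)} :=
    deleteEdges_anti (Set.singleton_subset_iff.mpr (G.mk'_mem_incidenceSet_left_iff.mpr ha))
  have hvb : (G.deleteEdges {s(v, a)}).Adj v b := by simp [hb.out, Ne.symm hne, ha.ne]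
  exact hvb.reachable.trans ((ConnectedComponent.exact hab).mono hle).symm

variable [Fintype V] {R : Type*} [CommRing R]

theorem IsAcyclic.sum_neighborFinset_single_branch_mul (hG : G.IsAcyclic) {v a : V}
    (ha : G.Adj v a) (r : R) (y : V → R) :
    ∑ x ∈ G.neighborFinset v, (Pi.single (G.branch v a) r : _ → R) (G.branch v x) * y x
      = r * y a := by
  rw [Finset.sum_eq_single_of_mem a ((G.mem_neighborFinset v a).mpr ha), Pi.single_eq_same]
  intro x hx hxa
  rw [Pi.single_eq_of_ne (fun h => hxa (hG.branch_injOn v (by simpa using hx) ha h)), zero_mul]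

variable [DecidableEq V]

theorem sum_neighborFinset_eq_zero_of_lapMatrix_mulVec_eq_smul {lam : R} {y : V → R}
    (hy : G.lapMatrix R *ᵥ y = lam • y) {v : V} (hv : y v = 0) :
    ∑ x ∈ G.neighborFinset v, y x = 0 := by
  simpa [lapMatrix_mulVec_apply, hv] using congrFun hy v

theorem exists_adj_ne_of_lapMatrix_mulVec_eq_smul {lam : R} {y : V → R}
    (hy : G.lapMatrix R *ᵥ y = lam • y) {v s : V} (hv : y v = 0) (hvs : G.Adj v s)
    (hs : y s ≠ 0) : ∃ s', G.Adj v s' ∧ s' ≠ s ∧ y s' ≠ 0 := by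
  by_contra! h
  refine hs ?_
  rw [← sum_neighborFinset_eq_zero_of_lapMatrix_mulVec_eq_smul hy hv,
    Finset.sum_eq_single_of_mem s ((G.mem_neighborFinset v s).mpr hvs)]
  exact fun x hx hxs => h x ((G.mem_neighborFinset v x).mp hx) hxs

/-- A vertex where the eigenvector vanishes decouples the equations on the two sides of it, so
rescaling by a function constant off `v` only has to be checked at `v` itself. -/
theorem lapMatrix_mulVec_mul_eq_smul {lam : R} {y c : V → R}
    (hy : G.lapMatrix R *ᵥ y = lam • y) {v : V} (hv : y v = 0)
    (hc : ∀ a b, (G.deleteIncidenceSet v).Adj a b → c a = c b)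
    (hsum : ∑ x ∈ G.neighborFinset v, c x * y x = 0) :
    G.lapMatrix R *ᵥ (c * y) = lam • (c * y) := by
  ext w
  simp only [lapMatrix_mulVec_apply, Pi.mul_apply, Pi.smul_apply, smul_eq_mul]
  by_cases hw : w = v
  · subst hw
    simp [hv, hsum]
  have heig : (G.degree w : R) * y w - ∑ x ∈ G.neighborFinset w, y x = lam * y w := by
    simpa [lapMatrix_mulVec_apply] using congrFun hy w
  have hterm : ∀ x ∈ G.neighborFinset w, c x * y x = c w * y x := by
    intro x hx
    by_cases hxv : x = v
    · simp [hxv, hv]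
    · rw [hc x w (deleteIncidenceSet_adj.mpr ⟨((G.mem_neighborFinset w x).mp hx).symm, hxv, hw⟩)]
  rw [Finset.sum_congr rfl hterm, ← Finset.mul_sum]
  linear_combination c w * heig

end SimpleGraph

section

open SimpleGraph

variable {V : Type*} [Fintype V] [DecidableEq V] {G : SimpleGraph V}

theorem isPerfectCriticalSet_support {lam : ℝ} {z : V → ℝ} (hz0 : z ≠ 0)
    (hz : G.lapMatrix ℝ *ᵥ z = lam • z) : IsPerfectCriticalSet G (Function.support z) :=
  ⟨Function.support_nonempty_iff.mpr hz0, lam, z, hz0, hz,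
    fun _ hw => Function.notMem_support.mp hw, fun _ hw => hw⟩

theorem IsMinimalPerfectCriticalSet.apply_ne_zero_of_eigenvector {S : Set V}
    (hS : IsMinimalPerfectCriticalSet G S) {lam : ℝ} {z : V → ℝ} (hz0 : z ≠ 0)
    (hz : G.lapMatrix ℝ *ᵥ z = lam • z) (hzS : ∀ w ∉ S, z w = 0) : ∀ w ∈ S, z w ≠ 0 := by
  by_contra! ⟨w, hwS, hzw⟩
  have hsupp : Function.support z ⊂ S :=
    ⟨fun x hx => by_contra fun hxS => hx (hzS x hxS), fun h => h hwS hzw⟩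
  exact hS.2 _ hsupp (isPerfectCriticalSet_support hz0 hz)

structure IsPerfectInducingEigenvector (G : SimpleGraph V) (S : Set V) (lam : ℝ) (y : V → ℝ) :
    Prop where
  mulVec_eq_smul : G.lapMatrix ℝ *ᵥ y = lam • y
  eq_zero_of_notMem : ∀ v ∉ S, y v = 0
  ne_zero_of_mem : ∀ v ∈ S, y v ≠ 0

theorem IsPerfectCriticalSet.exists_isPerfectInducingEigenvector {S : Set V}
    (hS : IsPerfectCriticalSet G S) : ∃ lam y, IsPerfectInducingEigenvector G S lam y :=
  let ⟨_, lam, y, _, hy, hyS, hyS'⟩ := hS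
  ⟨lam, y, hy, hyS, hyS'⟩

namespace IsMinimalPerfectCriticalSet

variable {S : Set V} {lam : ℝ} {y : V → ℝ} {v : V}

theorem branch_weight_ne_zero (hS : IsMinimalPerfectCriticalSet G S)
    (hy : IsPerfectInducingEigenvector G S lam y) (hv : v ∉ S)
    (f : (G.deleteIncidenceSet v).ConnectedComponent → ℝ)
    (hsum : ∑ x ∈ G.neighborFinset v, f (G.branch v x) * y x = 0)
    {w : V} (hw : w ∈ S) (hfw : f (G.branch v w) ≠ 0) : ∀ w' ∈ S, f (G.branch v w') ≠ 0 := by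
  have hc : ∀ a b, (G.deleteIncidenceSet v).Adj a b → f (G.branch v a) = f (G.branch v b) :=
    fun a b hab => congrArg f (branch_eq_of_adj hab)
  have hz := lapMatrix_mulVec_mul_eq_smul hy.mulVec_eq_smul (hy.eq_zero_of_notMem v hv) hc hsum
  have hz0 : (fun x => f (G.branch v x)) * y ≠ 0 :=
    Function.ne_iff.mpr ⟨w, mul_ne_zero hfw (hy.ne_zero_of_mem w hw)⟩
  have hzS : ∀ x ∉ S, ((fun x => f (G.branch v x)) * y) x = 0 :=
    fun x hx => by simp [hy.eq_zero_of_notMem x hx]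
  exact fun w' hw' => left_ne_zero_of_mul (hS.apply_ne_zero_of_eigenvector hz0 hz hzS w' hw')

theorem not_adj_of_adj_notMem (hS : IsMinimalPerfectCriticalSet G S)
    (hy : IsPerfectInducingEigenvector G S lam y) (hv : v ∉ S) (hG : G.IsAcyclic)
    {s u w : V} (hs : s ∈ S) (hvs : G.Adj v s) (hvu : G.Adj v u) (hu : u ∉ S) (hw : w ∈ S) :
    ¬ G.Adj u w := by
  intro huw
  have hbranch : G.branch v w = G.branch v u :=
    (branch_eq_of_adj (deleteIncidenceSet_adj.mpr ⟨huw, hvu.ne', fun h => hv (h ▸ hw)⟩)).symm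
  have hsum : ∑ x ∈ G.neighborFinset v,
      (Pi.single (G.branch v u) 1 : _ → ℝ) (G.branch v x) * y x = 0 := by
    rw [hG.sum_neighborFinset_single_branch_mul hvu, hy.eq_zero_of_notMem u hu, mul_zero]
  have hfs := hS.branch_weight_ne_zero hy hv _ hsum hw (by simp [hbranch]) s hs
  have hsu : G.branch v s = G.branch v u := by
    by_contra h
    exact hfs (Pi.single_eq_of_ne h _)
  exact hu (hG.branch_injOn v hvs hvu hsu ▸ hs)

/-- The weights `y b` on the branch of `a` and `-y a` on the branch of `b` cancel at `v`. -/
theorem eq_or_eq_of_adj (hS : IsMinimalPerfectCriticalSet G S)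
    (hy : IsPerfectInducingEigenvector G S lam y) (hv : v ∉ S) (hG : G.IsAcyclic)
    {a b d : V} (ha : a ∈ S) (hb : b ∈ S) (hd : d ∈ S)
    (hva : G.Adj v a) (hvb : G.Adj v b) (hvd : G.Adj v d) (hab : a ≠ b) : d = a ∨ d = b := by
  have hne : ∀ {x x'}, G.Adj v x → G.Adj v x' → x ≠ x' → G.branch v x ≠ G.branch v x' :=
    fun hx hx' hxx' h => hxx' (hG.branch_injOn v hx hx' h)
  set f : _ → ℝ := Pi.single (G.branch v a) (y b) - Pi.single (G.branch v b) (y a)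
  have hsum : ∑ x ∈ G.neighborFinset v, f (G.branch v x) * y x = 0 := by
    simp only [f, Pi.sub_apply, sub_mul, Finset.sum_sub_distrib,
      hG.sum_neighborFinset_single_branch_mul hva, hG.sum_neighborFinset_single_branch_mul hvb]
    ring
  have hfa : f (G.branch v a) ≠ 0 := by
    simpa [f, Pi.single_eq_of_ne (hne hva hvb hab)] using hy.ne_zero_of_mem b hb
  have hfd := hS.branch_weight_ne_zero hy hv f hsum ha hfa d hd
  by_contra! ⟨hda, hdb⟩
  exact hfd (by simp [f, Pi.single_eq_of_ne (hne hvd hva hda), Pi.single_eq_of_ne (hne hvd hvb hdb)])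

theorem ncard_adj_mem_eq_two (hS : IsMinimalPerfectCriticalSet G S)
    (hy : IsPerfectInducingEigenvector G S lam y) (hv : v ∉ S) (hG : G.IsAcyclic)
    {s : V} (hs : s ∈ S) (hvs : G.Adj v s) : {u ∈ S | G.Adj v u}.ncard = 2 := by
  obtain ⟨s', hvs', hs's, hys'⟩ := exists_adj_ne_of_lapMatrix_mulVec_eq_smul hy.mulVec_eq_smul
    (hy.eq_zero_of_notMem v hv) hvs (hy.ne_zero_of_mem s hs)
  have hs' : s' ∈ S := by_contra fun h => hys' (hy.eq_zero_of_notMem s' h)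
  refine Set.ncard_eq_two.mpr ⟨s, s', hs's.symm, Set.ext fun u => ⟨?_, ?_⟩⟩
  · rintro ⟨hu, hvu⟩
    exact hS.eq_or_eq_of_adj hy hv hG hs hs' hu hvs hvs' hvu hs's.symm
  · rintro (rfl | rfl)
    exacts [⟨hs, hvs⟩, ⟨hs', hvs'⟩]

end IsMinimalPerfectCriticalSet

end

/-- Proposition: if `S` is a minimal perfect critical set of a tree `G` and `B` is the set of
vertices outside `S` whose neighborhood in `S` is neither empty nor all of `S`, then every
vertex of `B` has exactly two neighbors in `S ∪ B`, i.e. degree `2` in the simplified graph. -/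
theorem mpcs_of_tree_outside_vertices_degree_two
    {V : Type*} [Fintype V] [DecidableEq V]
    (G : SimpleGraph V) (hG : G.IsTree)
    (S : Set V) (hS : IsMinimalPerfectCriticalSet G S)
    (B : Set V)
    (hB : B = {u : V | u ∉ S ∧ (∃ w ∈ S, G.Adj u w) ∧ ¬ (∀ w ∈ S, G.Adj u w)}) :
    ∀ v ∈ B, {u ∈ S ∪ B | G.Adj v u}.ncard = 2 := by
  rintro v hvB
  obtain ⟨hv, ⟨s, hs, hvs⟩, -⟩ := hB ▸ hvB
  obtain ⟨lam, y, hy⟩ := hS.1.exists_isPerfectInducingEigenvector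
  have hnoB : ∀ u ∈ B, ¬ G.Adj v u := by
    rintro u huB hvu
    obtain ⟨hu, ⟨w, hw, huw⟩, -⟩ := hB ▸ huB
    exact hS.not_adj_of_adj_notMem hy hv hG.isAcyclic hs hvs hvu hu hw huw
  have hnbhd : {u ∈ S ∪ B | G.Adj v u} = {u ∈ S | G.Adj v u} := by
    ext u
    exact and_congr_left fun hvu => or_iff_left fun huB => hnoB u huB hvu
  rw [hnbhd]
  exact hS.ncard_adj_mem_eq_two hy hv hG.isAcyclic hs hvs
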